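/- Let (A,≺,≻) be a finite-dimensional pre-alternative algebra over a field of characteristic ≠ 2 equipped with a nondegenerate symmetric bilinear form h satisfying h(x≺y, z) = h(x, y≻z) for all x,y,z ∈ A. Define φ: A → A* by ⟨φ(x), y⟩ = h(x,y), let r ∈ A⊗A be symmetric, and set T̃_r = T_r∘φ: A → A. Then T̃_r(x)∘T̃_r(y) = T̃_r(T̃_r(x)≻y + x≺T̃_r(y)) for all x,y ∈ A (i.e., T̃_r is an Al-operator of the associated alternative algebra As(A) associated to the bimodule (A, l_≻, r_≺)) if and only if r is a symmetric solution of the PA-equations. In that case x≺'y = x≺T̃_r(y) and x≻'y = T̃_r(x)≻y define a pre-alternative algebra structure on A. -/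

import Mathlib

/-!
A tensor `t ∈ A ⊗ A ⊗ A` vanishes as soon as all its pairings with `φ x ⊗ φ y ⊗ φ z` do, because
`φ` is bijective and pure tensors of functionals span the dual of a finite-dimensional tensor
product. Symmetry of `r` and of `h` makes `T̃_r` self-adjoint for `h`, and the invariance
`h(x ≺ y, z) = h(x, y ≻ z)` moves the products of each PA-expression across `h`; so the pairing of
every PA-expression with `φ x ⊗ φ y ⊗ φ z` is `h(w, T̃u ∘ T̃v - T̃(T̃u ≻ v + u ≺ T̃v))` for some
ordering `(w, u, v)` of `(x, y, z)`. Hence each PA-equation is equivalent to the Al-operator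
identity. That identity turns the associators of `(≺', ≻')` into associators of `(≺, ≻)` at
`T̃`-images, which is how the pre-alternative axioms transfer.
-/

open TensorProduct

universe u v w

variable {k : Type u} [Field k]

section Defs

variable {M : Type v} {V : Type w} [AddCommGroup M] [Module k M] [AddCommGroup V] [Module k V]

/-- Alternative algebra: both alternative laws. -/
def IsAlt (m : M →ₗ[k] M →ₗ[k] M) : Prop :=
  (∀ x y : M, m (m x x) y = m x (m x y)) ∧ (∀ x y : M, m (m y x) x = m y (m x x))

/-- right associator -/
def rAssoc (p s : M →ₗ[k] M →ₗ[k] M) (x y z : M) : M :=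
  p (p x y) z - p x (p y z + s y z)

/-- middle associator -/
def mAssoc (p s : M →ₗ[k] M →ₗ[k] M) (x y z : M) : M :=
  p (s x y) z - s x (p y z)

/-- left associator -/
def lAssoc (p s : M →ₗ[k] M →ₗ[k] M) (x y z : M) : M :=
  s (p x y + s x y) z - s x (s y z)

/-- Pre-alternative algebra. -/
def IsPreAlt (p s : M →ₗ[k] M →ₗ[k] M) : Prop :=
  (∀ x y z : M, mAssoc p s x y z + rAssoc p s y x z = 0) ∧
  (∀ x y z : M, mAssoc p s x y z + lAssoc p s x z y = 0) ∧
  (∀ x y : M, rAssoc p s y x x = 0) ∧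
  (∀ x y : M, lAssoc p s x x y = 0)

/-- Bimodule of an alternative algebra. -/
def IsAltBimod (m : M →ₗ[k] M →ₗ[k] M) (L R : M →ₗ[k] Module.End k V) : Prop :=
  (∀ x : M, L (m x x) = L x * L x) ∧
  (∀ x : M, R (m x x) = R x * R x) ∧
  (∀ x y : M, R y * L x - L x * R y = R (m x y) - R y * R x) ∧
  (∀ x y : M, L (m y x) - L y * L x = L y * R x - R x * L y)

/-- Bimodule of a pre-alternative algebra. -/
def IsPreAltBimod (p s : M →ₗ[k] M →ₗ[k] M) (Lp Rp Ls Rs : M →ₗ[k] Module.End k V) : Prop :=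
  (∀ x y : M, Ls ((p x y + s x y) + (p y x + s y x)) = Ls x * Ls y + Ls y * Ls x) ∧
  (∀ x y : M, Rs y * ((Lp x + Ls x) + (Rp x + Rs x)) = Ls x * Rs y + Rs (s x y)) ∧
  (∀ x y : M, Rp y * Ls x + Rp y * Rp x = Ls x * Rp y + Rp (p x y + s x y)) ∧
  (∀ x y : M, Rp y * Rs x + Rp y * Lp x = Rs (p x y) + Lp x * (Rp y + Rs y)) ∧
  (∀ x y : M, Lp (s x y) + Lp (p y x) = Ls x * Lp y + Lp y * (Lp x + Ls x)) ∧
  (∀ x y : M, Ls (p y x + s y x) + Rp x * Ls y = Ls y * Ls x + Ls y * Rp x) ∧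
  (∀ x y : M, Rs y * (Rp x + Rs x) + Rp x * Rs y = Rs (s x y) + Rs (p y x)) ∧
  (∀ x y : M, Rs x * (Lp y + Ls y) + Lp (s y x) = Ls y * Rs x + Ls y * Lp x) ∧
  (∀ x y : M, Rp y * Rp x + Rp x * Rp y = Rp ((p x y + s x y) + (p y x + s y x))) ∧
  (∀ x y : M, Rp y * Lp x + Lp (p x y) = Lp x * ((Rp y + Rs y) + (Lp y + Ls y)))

/-- Dual family of endomorphisms: `(dualT L) x = (L x)^*`. -/
noncomputable def dualT (L : M →ₗ[k] Module.End k V) :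
    M →ₗ[k] Module.End k (Module.Dual k V) :=
  (Module.Dual.transpose (R := k) (M := V) (M' := V)) ∘ₗ L

/-- The linear map `A* → A` associated to an element of `A ⊗ A`:
`⟨u* ⊗ v*, r⟩ = ⟨u*, T_r v*⟩`, i.e. `T_r(v*) = Σ v*(bᵢ) • aᵢ`. -/
noncomputable def Tr : (M ⊗[k] M) →ₗ[k] Module.Dual k M →ₗ[k] M :=
  TensorProduct.lift (LinearMap.mk₂ k
    (fun a b => (Module.Dual.eval k M b).smulRight a)
    (fun a a' b => by ext f; simp)
    (fun c a b => by ext f; simp only [LinearMap.smulRight_apply, LinearMap.smul_apply,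
      Module.Dual.eval_apply]; exact smul_comm _ _ _)
    (fun a b b' => by ext f; simp [add_smul])
    (fun c a b => by ext f; simp [map_smul, mul_smul]))

noncomputable def tlift (m : M →ₗ[k] M →ₗ[k] M) : M ⊗[k] M →ₗ[k] M := TensorProduct.lift m

/-- `r₁₂ ⋄ r₁₃` : `(a⊗b)⊗(c⊗d) ↦ (a⋄c)⊗b⊗d`. -/
noncomputable def comp12_13 (m : M →ₗ[k] M →ₗ[k] M) :
    (M ⊗[k] M) ⊗[k] (M ⊗[k] M) →ₗ[k] M ⊗[k] (M ⊗[k] M) :=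
  (TensorProduct.map (tlift m) LinearMap.id) ∘ₗ
    (TensorProduct.tensorTensorTensorComm k M M M M).toLinearMap

/-- `r₁₃ ⋄ r₁₂` : `(a⊗b)⊗(c⊗d) ↦ (a⋄c)⊗d⊗b`. -/
noncomputable def comp13_12 (m : M →ₗ[k] M →ₗ[k] M) :
    (M ⊗[k] M) ⊗[k] (M ⊗[k] M) →ₗ[k] M ⊗[k] (M ⊗[k] M) :=
  (TensorProduct.map (tlift m) (TensorProduct.comm k M M).toLinearMap) ∘ₗ
    (TensorProduct.tensorTensorTensorComm k M M M M).toLinearMap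

/-- `r₁₂ ⋄ r₂₃` : `(a⊗b)⊗(c⊗d) ↦ a⊗(b⋄c)⊗d`. -/
noncomputable def comp12_23 (m : M →ₗ[k] M →ₗ[k] M) :
    (M ⊗[k] M) ⊗[k] (M ⊗[k] M) →ₗ[k] M ⊗[k] (M ⊗[k] M) :=
  (TensorProduct.map LinearMap.id
      ((TensorProduct.map (tlift m) LinearMap.id) ∘ₗ
        (TensorProduct.assoc k M M M).symm.toLinearMap)) ∘ₗ
    (TensorProduct.assoc k M M (M ⊗[k] M)).toLinearMap

/-- `r₂₃ ⋄ r₁₂` : `(a⊗b)⊗(c⊗d) ↦ c⊗(a⋄d)⊗b`. -/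
noncomputable def comp23_12 (m : M →ₗ[k] M →ₗ[k] M) :
    (M ⊗[k] M) ⊗[k] (M ⊗[k] M) →ₗ[k] M ⊗[k] (M ⊗[k] M) :=
  (TensorProduct.map LinearMap.id
      ((TensorProduct.map (tlift m.flip) LinearMap.id) ∘ₗ
        (TensorProduct.assoc k M M M).symm.toLinearMap)) ∘ₗ
    (TensorProduct.assoc k M M (M ⊗[k] M)).toLinearMap ∘ₗ
    (TensorProduct.comm k (M ⊗[k] M) (M ⊗[k] M)).toLinearMap

/-- `r₁₃ ⋄ r₂₃` : `(a⊗b)⊗(c⊗d) ↦ a⊗c⊗(b⋄d)`. -/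
noncomputable def comp13_23 (m : M →ₗ[k] M →ₗ[k] M) :
    (M ⊗[k] M) ⊗[k] (M ⊗[k] M) →ₗ[k] M ⊗[k] (M ⊗[k] M) :=
  (TensorProduct.map LinearMap.id (TensorProduct.map LinearMap.id (tlift m))) ∘ₗ
    (TensorProduct.assoc k M M (M ⊗[k] M)).toLinearMap ∘ₗ
    (TensorProduct.tensorTensorTensorComm k M M M M).toLinearMap

/-- `r₂₃ ⋄ r₁₃` : `(a⊗b)⊗(c⊗d) ↦ c⊗a⊗(b⋄d)`. -/
noncomputable def comp23_13 (m : M →ₗ[k] M →ₗ[k] M) :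
    (M ⊗[k] M) ⊗[k] (M ⊗[k] M) →ₗ[k] M ⊗[k] (M ⊗[k] M) :=
  (TensorProduct.map LinearMap.id (TensorProduct.map LinearMap.id (tlift m))) ∘ₗ
    (TensorProduct.assoc k M M (M ⊗[k] M)).toLinearMap ∘ₗ
    (TensorProduct.map (TensorProduct.comm k M M).toLinearMap LinearMap.id) ∘ₗ
    (TensorProduct.tensorTensorTensorComm k M M M M).toLinearMap

/-- The alternative Yang–Baxter expression `r₂₃∘r₁₂ − r₁₂∘r₁₃ − r₁₃∘r₂₃`. -/
noncomputable def ayb (m : M →ₗ[k] M →ₗ[k] M) (r : M ⊗[k] M) : M ⊗[k] (M ⊗[k] M) :=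
  comp23_12 m (r ⊗ₜ r) - comp12_13 m (r ⊗ₜ r) - comp13_23 m (r ⊗ₜ r)

/-- PA-equations. -/
noncomputable def PA11 (p s : M →ₗ[k] M →ₗ[k] M) (r : M ⊗[k] M) : M ⊗[k] (M ⊗[k] M) :=
  comp12_13 (p + s) (r ⊗ₜ r) - comp23_12 s (r ⊗ₜ r) - comp13_23 p (r ⊗ₜ r)

noncomputable def PA12 (p s : M →ₗ[k] M →ₗ[k] M) (r : M ⊗[k] M) : M ⊗[k] (M ⊗[k] M) :=
  comp13_12 (p + s) (r ⊗ₜ r) - comp12_23 p (r ⊗ₜ r) - comp23_13 s (r ⊗ₜ r)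

noncomputable def PA21 (p s : M →ₗ[k] M →ₗ[k] M) (r : M ⊗[k] M) : M ⊗[k] (M ⊗[k] M) :=
  comp12_23 (p + s) (r ⊗ₜ r) - comp23_13 p (r ⊗ₜ r) - comp13_12 s (r ⊗ₜ r)

noncomputable def PA22 (p s : M →ₗ[k] M →ₗ[k] M) (r : M ⊗[k] M) : M ⊗[k] (M ⊗[k] M) :=
  comp23_12 (p + s) (r ⊗ₜ r) - comp13_23 s (r ⊗ₜ r) - comp12_13 p (r ⊗ₜ r)

noncomputable def PA31 (p s : M →ₗ[k] M →ₗ[k] M) (r : M ⊗[k] M) : M ⊗[k] (M ⊗[k] M) :=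
  comp13_23 (p + s) (r ⊗ₜ r) - comp12_13 s (r ⊗ₜ r) - comp23_12 p (r ⊗ₜ r)

noncomputable def PA32 (p s : M →ₗ[k] M →ₗ[k] M) (r : M ⊗[k] M) : M ⊗[k] (M ⊗[k] M) :=
  comp23_13 (p + s) (r ⊗ₜ r) - comp13_12 p (r ⊗ₜ r) - comp12_23 s (r ⊗ₜ r)

/-- Semidirect sum product on `M × V` for an alternative algebra `M` and a bimodule `(V,L,R)`. -/
def sd (m : M →ₗ[k] M →ₗ[k] M) (L R : M →ₗ[k] Module.End k V) :
    (M × V) →ₗ[k] (M × V) →ₗ[k] (M × V) :=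
  LinearMap.mk₂ k (fun x y => (m x.1 y.1, L x.1 y.2 + R y.1 x.2))
    (fun x x' y => by refine Prod.ext ?_ ?_ <;> simp [map_add] <;> abel)
    (fun c x y => by refine Prod.ext ?_ ?_ <;> simp [map_smul, smul_add])
    (fun x y y' => by refine Prod.ext ?_ ?_ <;> simp [map_add] <;> abel)
    (fun c x y => by refine Prod.ext ?_ ?_ <;> simp [map_smul, smul_add])

end Defs

section TensorPairing

variable {M : Type*} [AddCommGroup M] [Module k M] (m : M →ₗ[k] M →ₗ[k] M)
  (f g e : Module.Dual k M)

@[simp] lemma Tr_tmul (a b : M) : Tr (a ⊗ₜ[k] b) f = f b • a := by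
  simp [Tr]

lemma apply_Tr_eq_apply_Tr_comm (r : M ⊗[k] M) :
    f (Tr r g) = g (Tr (TensorProduct.comm k M M r) f) := by
  induction r using TensorProduct.induction_on with
  | zero => simp
  | tmul a b => simp [mul_comm]
  | add r r' hr hr' => simp [hr, hr']

noncomputable def pair3 : M ⊗[k] (M ⊗[k] M) →ₗ[k] k :=
  dualDistrib k M (M ⊗[k] M) (f ⊗ₜ dualDistrib k M M (g ⊗ₜ e))

@[simp] lemma pair3_tmul (a b c : M) :
    pair3 f g e (a ⊗ₜ (b ⊗ₜ c)) = f a * (g b * e c) := by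
  simp [pair3]

@[simp] lemma comp12_13_tmul (a b c d : M) :
    comp12_13 m ((a ⊗ₜ[k] b) ⊗ₜ[k] (c ⊗ₜ[k] d)) = m a c ⊗ₜ[k] (b ⊗ₜ[k] d) := by
  simp [comp12_13, tlift]

@[simp] lemma comp13_12_tmul (a b c d : M) :
    comp13_12 m ((a ⊗ₜ[k] b) ⊗ₜ[k] (c ⊗ₜ[k] d)) = m a c ⊗ₜ[k] (d ⊗ₜ[k] b) := by
  simp [comp13_12, tlift]

@[simp] lemma comp12_23_tmul (a b c d : M) :
    comp12_23 m ((a ⊗ₜ[k] b) ⊗ₜ[k] (c ⊗ₜ[k] d)) = a ⊗ₜ[k] (m b c ⊗ₜ[k] d) := by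
  simp [comp12_23, tlift]

@[simp] lemma comp23_12_tmul (a b c d : M) :
    comp23_12 m ((a ⊗ₜ[k] b) ⊗ₜ[k] (c ⊗ₜ[k] d)) = c ⊗ₜ[k] (m a d ⊗ₜ[k] b) := by
  simp [comp23_12, tlift]

@[simp] lemma comp13_23_tmul (a b c d : M) :
    comp13_23 m ((a ⊗ₜ[k] b) ⊗ₜ[k] (c ⊗ₜ[k] d)) = a ⊗ₜ[k] (c ⊗ₜ[k] m b d) := by
  simp [comp13_23, tlift]

@[simp] lemma comp23_13_tmul (a b c d : M) :
    comp23_13 m ((a ⊗ₜ[k] b) ⊗ₜ[k] (c ⊗ₜ[k] d)) = c ⊗ₜ[k] (a ⊗ₜ[k] m b d) := by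
  simp [comp23_13, tlift]

lemma pair3_comp12_13 (r r' : M ⊗[k] M) :
    pair3 f g e (comp12_13 m (r ⊗ₜ r')) = f (m (Tr r g) (Tr r' e)) := by
  induction r using TensorProduct.induction_on with
  | zero => simp
  | add r₁ r₂ h₁ h₂ => simp [add_tmul, h₁, h₂]
  | tmul a b =>
    induction r' using TensorProduct.induction_on with
    | zero => simp
    | add r₁ r₂ h₁ h₂ => simp [tmul_add, h₁, h₂]
    | tmul c d =>
      simp only [comp12_13_tmul, pair3_tmul, Tr_tmul, map_smul, LinearMap.smul_apply, smul_eq_mul]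
      ring

lemma pair3_comp13_12 (r r' : M ⊗[k] M) :
    pair3 f g e (comp13_12 m (r ⊗ₜ r')) = f (m (Tr r e) (Tr r' g)) := by
  induction r using TensorProduct.induction_on with
  | zero => simp
  | add r₁ r₂ h₁ h₂ => simp [add_tmul, h₁, h₂]
  | tmul a b =>
    induction r' using TensorProduct.induction_on with
    | zero => simp
    | add r₁ r₂ h₁ h₂ => simp [tmul_add, h₁, h₂]
    | tmul c d =>
      simp only [comp13_12_tmul, pair3_tmul, Tr_tmul, map_smul, LinearMap.smul_apply, smul_eq_mul]
      ring

lemma pair3_comp12_23 (r r' : M ⊗[k] M) :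
    pair3 f g e (comp12_23 m (r ⊗ₜ r')) =
      g (m (Tr (TensorProduct.comm k M M r) f) (Tr r' e)) := by
  induction r using TensorProduct.induction_on with
  | zero => simp
  | add r₁ r₂ h₁ h₂ => simp [add_tmul, h₁, h₂]
  | tmul a b =>
    induction r' using TensorProduct.induction_on with
    | zero => simp
    | add r₁ r₂ h₁ h₂ => simp [tmul_add, h₁, h₂]
    | tmul c d =>
      simp only [comp12_23_tmul, pair3_tmul, Tr_tmul, TensorProduct.comm_tmul,
        map_smul, LinearMap.smul_apply, smul_eq_mul]
      ring

lemma pair3_comp23_12 (r r' : M ⊗[k] M) :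
    pair3 f g e (comp23_12 m (r ⊗ₜ r')) =
      g (m (Tr r e) (Tr (TensorProduct.comm k M M r') f)) := by
  induction r using TensorProduct.induction_on with
  | zero => simp
  | add r₁ r₂ h₁ h₂ => simp [add_tmul, h₁, h₂]
  | tmul a b =>
    induction r' using TensorProduct.induction_on with
    | zero => simp
    | add r₁ r₂ h₁ h₂ => simp [tmul_add, h₁, h₂]
    | tmul c d =>
      simp only [comp23_12_tmul, pair3_tmul, Tr_tmul, TensorProduct.comm_tmul,
        map_smul, LinearMap.smul_apply, smul_eq_mul]
      ring

lemma pair3_comp13_23 (r r' : M ⊗[k] M) :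
    pair3 f g e (comp13_23 m (r ⊗ₜ r')) =
      e (m (Tr (TensorProduct.comm k M M r) f) (Tr (TensorProduct.comm k M M r') g)) := by
  induction r using TensorProduct.induction_on with
  | zero => simp
  | add r₁ r₂ h₁ h₂ => simp [add_tmul, h₁, h₂]
  | tmul a b =>
    induction r' using TensorProduct.induction_on with
    | zero => simp
    | add r₁ r₂ h₁ h₂ => simp [tmul_add, h₁, h₂]
    | tmul c d =>
      simp only [comp13_23_tmul, pair3_tmul, Tr_tmul, TensorProduct.comm_tmul,
        map_smul, LinearMap.smul_apply, smul_eq_mul]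
      ring

lemma pair3_comp23_13 (r r' : M ⊗[k] M) :
    pair3 f g e (comp23_13 m (r ⊗ₜ r')) =
      e (m (Tr (TensorProduct.comm k M M r) g) (Tr (TensorProduct.comm k M M r') f)) := by
  induction r using TensorProduct.induction_on with
  | zero => simp
  | add r₁ r₂ h₁ h₂ => simp [add_tmul, h₁, h₂]
  | tmul a b =>
    induction r' using TensorProduct.induction_on with
    | zero => simp
    | add r₁ r₂ h₁ h₂ => simp [tmul_add, h₁, h₂]
    | tmul c d =>
      simp only [comp23_13_tmul, pair3_tmul, Tr_tmul, TensorProduct.comm_tmul,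
        map_smul, LinearMap.smul_apply, smul_eq_mul]

end TensorPairing

section Separation

variable {R M N P : Type*} [CommRing R] [AddCommGroup M] [Module R M] [Module.Free R M]
  [Module.Finite R M] [AddCommGroup N] [Module R N] [Module.Free R N] [Module.Finite R N]
  [AddCommGroup P] [Module R P]

lemma ext_dualDistrib {Φ Ψ : Module.Dual R (M ⊗[R] N) →ₗ[R] P}
    (h : ∀ f g, Φ (dualDistrib R M N (f ⊗ₜ g)) = Ψ (dualDistrib R M N (f ⊗ₜ g))) : Φ = Ψ :=
  ((dualDistribEquiv R M N).eq_comp_toLinearMap_iff Φ Ψ).mp (TensorProduct.ext' h)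

lemma eq_zero_of_forall_dualDistrib_apply {t : M ⊗[R] N}
    (h : ∀ f g, dualDistrib R M N (f ⊗ₜ g) t = 0) : t = 0 :=
  (Module.forall_dual_apply_eq_zero_iff R t).mp fun φ =>
    LinearMap.congr_fun (ext_dualDistrib (Φ := Module.Dual.eval R _ t) (Ψ := 0) h) φ

end Separation

lemma eq_zero_of_forall_pair3 {M : Type*} [AddCommGroup M] [Module k M] [FiniteDimensional k M]
    {t : M ⊗[k] (M ⊗[k] M)} (h : ∀ f g e, pair3 f g e t = 0) : t = 0 :=
  eq_zero_of_forall_dualDistrib_apply fun f G => LinearMap.congr_fun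
    (ext_dualDistrib (Ψ := 0)
      (Φ := Module.Dual.eval k _ t ∘ₗ dualDistrib k M (M ⊗[k] M) ∘ₗ TensorProduct.mk k _ _ f)
      (h f)) G

section AlOperator

variable {M : Type*} [AddCommGroup M] [Module k M] {p s : M →ₗ[k] M →ₗ[k] M} {T : M →ₗ[k] M}

/-- `T` is an Al-operator of `As(M)` associated to the bimodule `(M, l_≻, r_≺)`, where `p = ≺`
and `s = ≻`. -/
def IsAlOperator (p s : M →ₗ[k] M →ₗ[k] M) (T : M →ₗ[k] M) : Prop :=
  ∀ x y, (p + s) (T x) (T y) = T (s (T x) y + p x (T y))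

def alDefect (p s : M →ₗ[k] M →ₗ[k] M) (T : M →ₗ[k] M) (x y : M) : M :=
  (p + s) (T x) (T y) - T (s (T x) y + p x (T y))

lemma IsAlOperator.apply_add (hT : IsAlOperator p s T) (x y : M) :
    T (p x (T y) + s (T x) y) = p (T x) (T y) + s (T x) (T y) := by
  rw [add_comm, ← hT, LinearMap.add_apply, LinearMap.add_apply]

lemma IsAlOperator.rAssoc_eq (hT : IsAlOperator p s T) (x y z : M) :
    rAssoc (p.compl₂ T) (s ∘ₗ T) x y z = rAssoc p s x (T y) (T z) := by
  simp only [rAssoc, LinearMap.compl₂_apply, LinearMap.comp_apply, hT.apply_add]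

lemma IsAlOperator.lAssoc_eq (hT : IsAlOperator p s T) (x y z : M) :
    lAssoc (p.compl₂ T) (s ∘ₗ T) x y z = lAssoc p s (T x) (T y) z := by
  simp only [lAssoc, LinearMap.compl₂_apply, LinearMap.comp_apply, hT.apply_add]

lemma mAssoc_compl₂_comp (x y z : M) :
    mAssoc (p.compl₂ T) (s ∘ₗ T) x y z = mAssoc p s (T x) y (T z) :=
  rfl

theorem IsAlOperator.isPreAlt (hT : IsAlOperator p s T) (h : IsPreAlt p s) :
    IsPreAlt (p.compl₂ T) (s ∘ₗ T) := by
  obtain ⟨hmr, hml, hr, hl⟩ := h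
  refine ⟨fun x y z => ?_, fun x y z => ?_, fun x y => ?_, fun x y => ?_⟩
  · rw [mAssoc_compl₂_comp, hT.rAssoc_eq]; exact hmr (T x) y (T z)
  · rw [mAssoc_compl₂_comp, hT.lAssoc_eq]; exact hml (T x) y (T z)
  · rw [hT.rAssoc_eq]; exact hr (T x) y
  · rw [hT.lAssoc_eq]; exact hl (T x) y

end AlOperator

section InvariantForm

variable {A : Type*} [AddCommGroup A] [Module k A] {p s : A →ₗ[k] A →ₗ[k] A}
  {B : A →ₗ[k] Module.Dual k A} {r : A ⊗[k] A}

lemma surjective_of_separatingLeft [FiniteDimensional k A] (hB : B.SeparatingLeft) :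
    Function.Surjective B :=
  (LinearMap.injective_iff_surjective_of_finrank_eq_finrank Subspace.dual_finrank_eq.symm).mp
    (LinearMap.ker_eq_bot.mp (LinearMap.separatingLeft_iff_ker_eq_bot.mp hB))

lemma isAlOperator_iff_forall_apply_alDefect (hB : B.SeparatingLeft)
    (hBsymm : ∀ x y, B x y = B y x) {T : A →ₗ[k] A} :
    IsAlOperator p s T ↔ ∀ x y z, B x (alDefect p s T y z) = 0 := by
  refine ⟨fun hT x y z => ?_, fun h y z => sub_eq_zero.mp (hB _ fun x => ?_)⟩
  · rw [show alDefect p s T y z = 0 from sub_eq_zero.mpr (hT y z), map_zero]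
  · rw [hBsymm]; exact h x y z

lemma apply_Tr_apply_eq_apply_Tr_apply (hBsymm : ∀ x y, B x y = B y x)
    (hr : TensorProduct.comm k A A r = r) (x y : A) : B (Tr r (B x)) y = B x (Tr r (B y)) := by
  rw [hBsymm, apply_Tr_eq_apply_Tr_comm, hr]

lemma apply_s_Tr_eq (hBsymm : ∀ x y, B x y = B y x) (hBinv : ∀ x y z, B (p x y) z = B x (s y z))
    (hr : TensorProduct.comm k A A r = r) (u v w : A) :
    B u (s v (Tr r (B w))) = B w (Tr r (B (p u v))) := by
  rw [← hBinv, ← apply_Tr_apply_eq_apply_Tr_apply hBsymm hr, hBsymm]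

lemma apply_p_Tr_eq (hBsymm : ∀ x y, B x y = B y x) (hBinv : ∀ x y z, B (p x y) z = B x (s y z))
    (hr : TensorProduct.comm k A A r = r) (u v w : A) :
    B u (p (Tr r (B w)) v) = B w (Tr r (B (s v u))) := by
  rw [hBsymm, hBinv, apply_Tr_apply_eq_apply_Tr_apply hBsymm hr]

lemma pair3_PA11 (hBsymm : ∀ x y, B x y = B y x) (hBinv : ∀ x y z, B (p x y) z = B x (s y z))
    (hr : TensorProduct.comm k A A r = r) (x y z : A) :
    pair3 (B x) (B y) (B z) (PA11 p s r) = B x (alDefect p s (Tr r ∘ₗ B) y z) := by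
  simp only [PA11, map_sub, pair3_comp12_13, pair3_comp23_12, pair3_comp13_23, hr,
    apply_s_Tr_eq hBsymm hBinv hr, apply_p_Tr_eq hBsymm hBinv hr, alDefect, LinearMap.comp_apply,
    map_add]
  ring

lemma pair3_PA12 (hBsymm : ∀ x y, B x y = B y x) (hBinv : ∀ x y z, B (p x y) z = B x (s y z))
    (hr : TensorProduct.comm k A A r = r) (x y z : A) :
    pair3 (B x) (B y) (B z) (PA12 p s r) = B x (alDefect p s (Tr r ∘ₗ B) z y) := by
  simp only [PA12, map_sub, pair3_comp13_12, pair3_comp12_23, pair3_comp23_13, hr,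
    apply_s_Tr_eq hBsymm hBinv hr, apply_p_Tr_eq hBsymm hBinv hr, alDefect, LinearMap.comp_apply,
    map_add]
  ring

lemma pair3_PA21 (hBsymm : ∀ x y, B x y = B y x) (hBinv : ∀ x y z, B (p x y) z = B x (s y z))
    (hr : TensorProduct.comm k A A r = r) (x y z : A) :
    pair3 (B x) (B y) (B z) (PA21 p s r) = B y (alDefect p s (Tr r ∘ₗ B) x z) := by
  simp only [PA21, map_sub, pair3_comp12_23, pair3_comp23_13, pair3_comp13_12, hr,
    apply_s_Tr_eq hBsymm hBinv hr, apply_p_Tr_eq hBsymm hBinv hr, alDefect, LinearMap.comp_apply,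
    map_add]
  ring

lemma pair3_PA22 (hBsymm : ∀ x y, B x y = B y x) (hBinv : ∀ x y z, B (p x y) z = B x (s y z))
    (hr : TensorProduct.comm k A A r = r) (x y z : A) :
    pair3 (B x) (B y) (B z) (PA22 p s r) = B y (alDefect p s (Tr r ∘ₗ B) z x) := by
  simp only [PA22, map_sub, pair3_comp23_12, pair3_comp13_23, pair3_comp12_13, hr,
    apply_s_Tr_eq hBsymm hBinv hr, apply_p_Tr_eq hBsymm hBinv hr, alDefect, LinearMap.comp_apply,
    map_add]
  ring

lemma pair3_PA31 (hBsymm : ∀ x y, B x y = B y x) (hBinv : ∀ x y z, B (p x y) z = B x (s y z))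
    (hr : TensorProduct.comm k A A r = r) (x y z : A) :
    pair3 (B x) (B y) (B z) (PA31 p s r) = B z (alDefect p s (Tr r ∘ₗ B) x y) := by
  simp only [PA31, map_sub, pair3_comp13_23, pair3_comp12_13, pair3_comp23_12, hr,
    apply_s_Tr_eq hBsymm hBinv hr, apply_p_Tr_eq hBsymm hBinv hr, alDefect, LinearMap.comp_apply,
    map_add]
  ring

lemma pair3_PA32 (hBsymm : ∀ x y, B x y = B y x) (hBinv : ∀ x y z, B (p x y) z = B x (s y z))
    (hr : TensorProduct.comm k A A r = r) (x y z : A) :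
    pair3 (B x) (B y) (B z) (PA32 p s r) = B z (alDefect p s (Tr r ∘ₗ B) y x) := by
  simp only [PA32, map_sub, pair3_comp23_13, pair3_comp13_12, pair3_comp12_23, hr,
    apply_s_Tr_eq hBsymm hBinv hr, apply_p_Tr_eq hBsymm hBinv hr, alDefect, LinearMap.comp_apply,
    map_add]
  ring

theorem pa_equations_iff_isAlOperator [FiniteDimensional k A] (hB : B.SeparatingLeft)
    (hBsymm : ∀ x y, B x y = B y x) (hBinv : ∀ x y z, B (p x y) z = B x (s y z))
    (hr : TensorProduct.comm k A A r = r) :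
    (PA11 p s r = 0 ∧ PA12 p s r = 0 ∧ PA21 p s r = 0 ∧
        PA22 p s r = 0 ∧ PA31 p s r = 0 ∧ PA32 p s r = 0) ↔
      IsAlOperator p s (Tr r ∘ₗ B) := by
  have eq_zero_iff (t : A ⊗[k] (A ⊗[k] A)) :
      t = 0 ↔ ∀ x y z, pair3 (B x) (B y) (B z) t = 0 :=
    ⟨by rintro rfl x y z; rw [map_zero],
      fun h => eq_zero_of_forall_pair3 ((surjective_of_separatingLeft hB).forall₃.mpr h)⟩
  simp only [eq_zero_iff, pair3_PA11 hBsymm hBinv hr, pair3_PA12 hBsymm hBinv hr,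
    pair3_PA21 hBsymm hBinv hr, pair3_PA22 hBsymm hBinv hr, pair3_PA31 hBsymm hBinv hr,
    pair3_PA32 hBsymm hBinv hr, isAlOperator_iff_forall_apply_alDefect hB hBsymm]
  -- the six conditions differ only in the order of the quantified variables
  exact ⟨fun h => h.1, fun h => ⟨h, fun _ _ _ => h _ _ _, fun _ _ _ => h _ _ _,
    fun _ _ _ => h _ _ _, fun _ _ _ => h _ _ _, fun _ _ _ => h _ _ _⟩⟩

end InvariantForm

theorem stmt18_general {A : Type v} [AddCommGroup A] [Module k A] [FiniteDimensional k A]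
    (p s : A →ₗ[k] A →ₗ[k] A) (h : IsPreAlt p s)
    (hB : A →ₗ[k] Module.Dual k A)
    (hsymmB : ∀ x y, hB x y = hB y x)
    (hnondeg : ∀ x, (∀ y, hB x y = 0) → x = 0)
    (hassoc : ∀ x y z : A, hB (p x y) z = hB x (s y z))
    (r : A ⊗[k] A) (hsymm : TensorProduct.comm k A A r = r) :
    ((∀ x y : A,
        (p + s) ((Tr r ∘ₗ hB) x) ((Tr r ∘ₗ hB) y) =
          (Tr r ∘ₗ hB) (s ((Tr r ∘ₗ hB) x) y + p x ((Tr r ∘ₗ hB) y))) ↔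
      (PA11 p s r = 0 ∧ PA12 p s r = 0 ∧ PA21 p s r = 0 ∧
        PA22 p s r = 0 ∧ PA31 p s r = 0 ∧ PA32 p s r = 0)) ∧
    ((PA11 p s r = 0 ∧ PA12 p s r = 0 ∧ PA21 p s r = 0 ∧
        PA22 p s r = 0 ∧ PA31 p s r = 0 ∧ PA32 p s r = 0) →
      IsPreAlt (p.compl₂ (Tr r ∘ₗ hB)) (s ∘ₗ (Tr r ∘ₗ hB))) := by
  have hPA := pa_equations_iff_isAlOperator hnondeg hsymmB hassoc hsymm
  exact ⟨hPA.symm, fun hsol => (hPA.mp hsol).isPreAlt h⟩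

theorem stmt18 {A : Type v} [AddCommGroup A] [Module k A] [FiniteDimensional k A]
    (hchar : (2 : k) ≠ 0) (p s : A →ₗ[k] A →ₗ[k] A) (h : IsPreAlt p s)
    (hB : A →ₗ[k] Module.Dual k A)
    (hsymmB : ∀ x y, hB x y = hB y x)
    (hnondeg : ∀ x, (∀ y, hB x y = 0) → x = 0)
    (hassoc : ∀ x y z : A, hB (p x y) z = hB x (s y z))
    (r : A ⊗[k] A) (hsymm : TensorProduct.comm k A A r = r) :
    ((∀ x y : A,
        (p + s) ((Tr r ∘ₗ hB) x) ((Tr r ∘ₗ hB) y) =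
          (Tr r ∘ₗ hB) (s ((Tr r ∘ₗ hB) x) y + p x ((Tr r ∘ₗ hB) y))) ↔
      (PA11 p s r = 0 ∧ PA12 p s r = 0 ∧ PA21 p s r = 0 ∧
        PA22 p s r = 0 ∧ PA31 p s r = 0 ∧ PA32 p s r = 0)) ∧
    ((PA11 p s r = 0 ∧ PA12 p s r = 0 ∧ PA21 p s r = 0 ∧
        PA22 p s r = 0 ∧ PA31 p s r = 0 ∧ PA32 p s r = 0) →
      IsPreAlt (p.compl₂ (Tr r ∘ₗ hB)) (s ∘ₗ (Tr r ∘ₗ hB))) :=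
  stmt18_general p s h hB hsymmB hnondeg hassoc r hsymm
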